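/- arXiv:2008.03751 — 3 statements merged into one kernel-verified Lean document; each statement's English description precedes it below -/
import Mathlib

section
/- Let ω < 0, 0 < α ≤ 1 and 0 < αγ ≤ β ≤ 1, and let λ ∈ ℂ. The equation F(s) = λ has a nonzero purely imaginary root s (i.e., Re(s) = 0, s ≠ 0) if and only if λ ∈ Ψ ∪ Ψ̄, where Ψ = {Λ(θ) : θ ∈ (0, απ/2)} and Ψ̄ = {z ∈ ℂ : conj(z) ∈ Ψ}. More precisely, F(iμ) = λ for some μ > 0 iff λ ∈ Ψ, and F(−iμ) = λ for some μ > 0 iff λ ∈ Ψ̄. -/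
open Real Complex Filter Set Topology

/-- The curve parametrization Λ(θ) bounding the stability region. -/
noncomputable def Lam (α β γ ω : ℝ) (θ : ℝ) : ℂ :=
  ((|ω| ^ (β / α) * Real.sin θ ^ (β / α - γ) * Real.sin (α * π / 2) ^ γ *
      Real.sin (α * π / 2 - θ) ^ (-(β / α)) : ℝ) : ℂ) *
    Complex.exp (Complex.I * ((γ * θ + (β - α * γ) * π / 2 : ℝ) : ℂ))

/-- The characteristic function F(s) = s^(β-αγ) (s^α - ω)^γ (principal branches). -/
noncomputable def Fc (α β γ ω : ℝ) (s : ℂ) : ℂ :=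
  s ^ ((β - α * γ : ℝ) : ℂ) * (s ^ ((α : ℝ) : ℂ) - (ω : ℂ)) ^ ((γ : ℝ) : ℂ)

/-- μ(θ) = (|ω| sin θ / sin(απ/2 - θ))^(1/α). -/
noncomputable def muP (α ω : ℝ) (θ : ℝ) : ℝ :=
  (|ω| * Real.sin θ / Real.sin (α * π / 2 - θ)) ^ (1 / α)

/-- ρ(θ) = |ω| sin(απ/2) / sin(απ/2 - θ). -/
noncomputable def rhoP (α ω : ℝ) (θ : ℝ) : ℝ :=
  |ω| * Real.sin (α * π / 2) / Real.sin (α * π / 2 - θ)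

/-- The curve Ψ = Λ((0, απ/2)). -/
noncomputable def PsiSet (α β γ ω : ℝ) : Set ℂ :=
  Lam α β γ ω '' Set.Ioo 0 (α * π / 2)

/-- The complex conjugate curve Ψ̄. -/
noncomputable def PsiBar (α β γ ω : ℝ) : Set ℂ :=
  {z : ℂ | (starRingEnd ℂ) z ∈ PsiSet α β γ ω}

/-!
Writing `I * μ = μ * exp (π / 2 * I)`, the point `(I * μ) ^ α - ω = μ ^ α * exp (α π / 2 * I) + |ω|`
lies in the sector `0 < arg < απ/2`. The sine rule in the triangle with vertices `0`, `|ω|` and this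
point shows that its argument `θ` and modulus `ρ` satisfy `μ ^ α = |ω| sin θ / sin (απ/2 - θ)` and
`ρ = |ω| sin (απ/2) / sin (απ/2 - θ)`, i.e. `μ = muP α ω θ` and `ρ = rhoP α ω θ`. As `muP α ω` maps
`(0, απ/2)` onto `(0, ∞)`, taking principal powers gives `F (I * μ) = μ ^ (β - αγ) ρ ^ γ
exp ((γθ + (β - αγ)π/2) I) = Λ(θ)`. Both arguments involved stay off the branch cut, so `F` commutes with
conjugation there, which turns the upper half of the imaginary axis into the lower one and `Ψ` into `Ψ̄`.
-/

open ComplexConjugate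

lemma cpow_ofReal_mul_exp_mul_I {r : ℝ} (hr : 0 < r) {θ : ℝ} (hθ : θ ∈ Ioc (-π) π) (c : ℝ) :
    ((r : ℂ) * Complex.exp (θ * I)) ^ (c : ℂ) =
      ((r ^ c : ℝ) : ℂ) * Complex.exp ((c * θ : ℝ) * I) := by
  have hexp : Complex.exp (θ * I) ≠ 0 := Complex.exp_ne_zero _
  rw [cpow_def_of_ne_zero (mul_ne_zero (ofReal_ne_zero.mpr hr.ne') hexp), log_ofReal_mul hr hexp,
    log_exp (by simpa using hθ.1) (by simpa using hθ.2), Real.rpow_def_of_pos hr, add_mul,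
    Complex.exp_add]
  push_cast
  ring_nf

lemma arg_ofReal_mul_exp_mul_I {r : ℝ} (hr : 0 < r) {θ : ℝ} (hθ : θ ∈ Ioc (-π) π) :
    arg ((r : ℂ) * Complex.exp (θ * I)) = θ := by
  rw [Complex.exp_mul_I]
  exact arg_mul_cos_add_sin_mul_I hr hθ

lemma I_mul_ofReal_cpow {μ : ℝ} (hμ : 0 < μ) (c : ℝ) :
    (I * μ) ^ (c : ℂ) = ((μ ^ c : ℝ) : ℂ) * Complex.exp ((c * (π / 2) : ℝ) * I) := by
  have hpolar : I * μ = μ * Complex.exp ((π / 2 : ℝ) * I) := by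
    rw [Complex.exp_mul_I, ← ofReal_cos, ← ofReal_sin, Real.cos_pi_div_two, Real.sin_pi_div_two]
    push_cast
    ring
  have hπ := Real.pi_pos
  rw [hpolar, cpow_ofReal_mul_exp_mul_I hμ ⟨by linarith, by linarith⟩]

lemma conj_cpow_ofReal {x : ℂ} (hx : x.arg ≠ π) (c : ℝ) : conj x ^ (c : ℂ) = conj (x ^ (c : ℂ)) := by
  rw [conj_cpow x _ hx, conj_ofReal]

lemma Fc_conj (α β γ ω : ℝ) {s : ℂ} (hs : s.arg ≠ π) (hs' : (s ^ (α : ℂ) - ω).arg ≠ π) :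
    Fc α β γ ω (conj s) = conj (Fc α β γ ω s) := by
  rw [Fc, Fc, map_mul, ← conj_cpow_ofReal hs', map_sub, conj_ofReal, conj_cpow_ofReal hs,
    conj_cpow_ofReal hs]

lemma exists_re_eq_zero_ne_zero_iff (P : ℂ → Prop) :
    (∃ s : ℂ, s.re = 0 ∧ s ≠ 0 ∧ P s) ↔
      (∃ μ : ℝ, 0 < μ ∧ P (I * μ)) ∨ ∃ μ : ℝ, 0 < μ ∧ P (-(I * μ)) := by
  constructor
  · rintro ⟨s, hre, hs0, hP⟩
    have hs : s = I * s.im := Complex.ext (by simp [hre]) (by simp)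
    rcases lt_or_gt_of_ne (fun him : s.im = 0 ↦ hs0 (by rw [hs, him]; simp)) with him | him
    · exact Or.inr ⟨-s.im, neg_pos.mpr him, by rwa [ofReal_neg, mul_neg, neg_neg, ← hs]⟩
    · exact Or.inl ⟨s.im, him, by rwa [← hs]⟩
  · rintro (⟨μ, hμ, hP⟩ | ⟨μ, hμ, hP⟩)
    · exact ⟨I * μ, by simp, by simp [hμ.ne'], hP⟩
    · exact ⟨-(I * μ), by simp, by simp [hμ.ne'], hP⟩

section Parametrization

variable {α β γ ω θ : ℝ}

lemma sin_pos_of_mem_Ioo_mul_pi_div_two (hα1 : α ≤ 1) (hθ : θ ∈ Ioo 0 (α * π / 2)) :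
    0 < Real.sin θ ∧ 0 < Real.sin (α * π / 2 - θ) ∧ 0 < Real.sin (α * π / 2) := by
  obtain ⟨hθ0, hθΦ⟩ := hθ
  have hπ := Real.pi_pos
  have hΦ : α * π / 2 ≤ π / 2 := by nlinarith
  exact ⟨Real.sin_pos_of_pos_of_lt_pi hθ0 (by linarith),
    Real.sin_pos_of_pos_of_lt_pi (by linarith) (by linarith),
    Real.sin_pos_of_pos_of_lt_pi (by linarith) (by linarith)⟩

lemma muP_pos (hω : ω < 0) (hα1 : α ≤ 1) (hθ : θ ∈ Ioo 0 (α * π / 2)) : 0 < muP α ω θ := by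
  obtain ⟨hsθ, hsΔ, -⟩ := sin_pos_of_mem_Ioo_mul_pi_div_two hα1 hθ
  have hωa : 0 < |ω| := abs_pos.mpr hω.ne
  unfold muP
  positivity

lemma muP_rpow (hα1 : α ≤ 1) (hθ : θ ∈ Ioo 0 (α * π / 2)) :
    muP α ω θ ^ α = |ω| * Real.sin θ / Real.sin (α * π / 2 - θ) := by
  obtain ⟨hsθ, hsΔ, -⟩ := sin_pos_of_mem_Ioo_mul_pi_div_two hα1 hθ
  have hα0 : 0 < α := by nlinarith [hθ.1, hθ.2, Real.pi_pos]
  rw [muP, ← Real.rpow_mul (by positivity), one_div, inv_mul_cancel₀ hα0.ne', Real.rpow_one]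

lemma exists_muP_eq (hω : ω < 0) (hα0 : 0 < α) (hα1 : α ≤ 1) {μ : ℝ} (hμ : 0 < μ) :
    ∃ θ ∈ Ioo 0 (α * π / 2), muP α ω θ = μ := by
  set Φ := α * π / 2 with hΦ
  have hπ := Real.pi_pos
  have hsΦ : 0 < Real.sin Φ := Real.sin_pos_of_pos_of_lt_pi (by positivity) (by nlinarith)
  have hωa : 0 < |ω| := abs_pos.mpr hω.ne
  have hμα : 0 < μ ^ α := Real.rpow_pos_of_pos hμ α
  -- the defining relation of `muP` changes sign between the endpoints of the sector
  have hsign : (0 : ℝ) ∈ Ioo (μ ^ α * Real.sin (Φ - Φ) - |ω| * Real.sin Φ)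
      (μ ^ α * Real.sin (Φ - 0) - |ω| * Real.sin 0) := by
    simp only [sub_self, sub_zero, Real.sin_zero, mul_zero]
    constructor <;> nlinarith
  obtain ⟨θ, hθ, hrel⟩ := intermediate_value_Ioo' (by positivity)
    (f := fun t ↦ μ ^ α * Real.sin (Φ - t) - |ω| * Real.sin t) (by fun_prop) hsign
  refine ⟨θ, hθ, ?_⟩
  obtain ⟨-, hsΔ, -⟩ := sin_pos_of_mem_Ioo_mul_pi_div_two hα1 hθ
  have hμα_eq : |ω| * Real.sin θ / Real.sin (Φ - θ) = μ ^ α := by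
    rw [div_eq_iff hsΔ.ne']
    linarith
  rw [muP, hμα_eq, ← Real.rpow_mul hμ.le, mul_one_div_cancel hα0.ne', Real.rpow_one]

lemma I_mul_muP_cpow_sub (hω : ω < 0) (hα1 : α ≤ 1) (hθ : θ ∈ Ioo 0 (α * π / 2)) :
    (I * muP α ω θ) ^ (α : ℂ) - ω = rhoP α ω θ * Complex.exp (θ * I) := by
  obtain ⟨hsθ, hsΔ, hsΦ⟩ := sin_pos_of_mem_Ioo_mul_pi_div_two hα1 hθ
  have hcos : Real.sin (α * π / 2) * Real.cos θ =
      Real.sin θ * Real.cos (α * π / 2) + Real.sin (α * π / 2 - θ) := by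
    rw [Real.sin_sub]; ring
  rw [I_mul_ofReal_cpow (muP_pos hω hα1 hθ), muP_rpow hα1 hθ, Complex.exp_mul_I,
    Complex.exp_mul_I, ← ofReal_cos, ← ofReal_sin, ← ofReal_cos, ← ofReal_sin, rhoP]
  rw [abs_of_neg hω]
  generalize Real.sin (α * π / 2 - θ) = S at hsΔ hcos ⊢
  apply Complex.ext <;>
    simp only [sub_re, sub_im, mul_re, mul_im, add_re, add_im, ofReal_re, ofReal_im, I_re, I_im]
    <;> field_simp
  · linear_combination ω * hcos
  · ring

lemma rhoP_pos (hω : ω < 0) (hα1 : α ≤ 1) (hθ : θ ∈ Ioo 0 (α * π / 2)) : 0 < rhoP α ω θ := by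
  obtain ⟨-, hsΔ, hsΦ⟩ := sin_pos_of_mem_Ioo_mul_pi_div_two hα1 hθ
  have hωa : 0 < |ω| := abs_pos.mpr hω.ne
  unfold rhoP
  positivity

lemma muP_rpow_mul_rhoP_rpow (hω : ω < 0) (hα1 : α ≤ 1) (hθ : θ ∈ Ioo 0 (α * π / 2)) :
    muP α ω θ ^ (β - α * γ) * rhoP α ω θ ^ γ =
      |ω| ^ (β / α) * Real.sin θ ^ (β / α - γ) * Real.sin (α * π / 2) ^ γ *
        Real.sin (α * π / 2 - θ) ^ (-(β / α)) := by
  obtain ⟨hsθ, hsΔ, hsΦ⟩ := sin_pos_of_mem_Ioo_mul_pi_div_two hα1 hθ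
  have hα0 : 0 < α := by nlinarith [hθ.1, hθ.2, Real.pi_pos]
  have hωa : 0 < |ω| := abs_pos.mpr hω.ne
  have hexp : β - α * γ = α * (β / α - γ) := by field_simp
  rw [hexp, Real.rpow_mul (muP_pos hω hα1 hθ).le, muP_rpow hα1 hθ, rhoP,
    Real.div_rpow (by positivity) hsΔ.le, Real.div_rpow (by positivity) hsΔ.le,
    Real.mul_rpow hωa.le hsθ.le, Real.mul_rpow hωa.le hsΦ.le, Real.rpow_neg hsΔ.le,
    show β / α = (β / α - γ) + γ by ring, Real.rpow_add hωa, Real.rpow_add hsΔ]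
  field_simp
  ring_nf

lemma Fc_I_mul_muP (hω : ω < 0) (hα1 : α ≤ 1) (hθ : θ ∈ Ioo 0 (α * π / 2)) :
    Fc α β γ ω (I * muP α ω θ) = Lam α β γ ω θ := by
  have hπ := Real.pi_pos
  have hθ' : θ ∈ Ioc (-π) π := ⟨by linarith [hθ.1], by nlinarith [hθ.2]⟩
  rw [Fc, I_mul_ofReal_cpow (muP_pos hω hα1 hθ), I_mul_muP_cpow_sub hω hα1 hθ,
    cpow_ofReal_mul_exp_mul_I (rhoP_pos hω hα1 hθ) hθ', Lam,
    ← muP_rpow_mul_rhoP_rpow hω hα1 hθ, mul_mul_mul_comm, ← Complex.exp_add]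
  push_cast
  congr 2
  ring

lemma Fc_neg_I_mul_muP (hω : ω < 0) (hα1 : α ≤ 1) (hθ : θ ∈ Ioo 0 (α * π / 2)) :
    Fc α β γ ω (-(I * muP α ω θ)) = conj (Lam α β γ ω θ) := by
  have hπ := Real.pi_pos
  have hθ' : θ ∈ Ioc (-π) π := ⟨by linarith [hθ.1], by nlinarith [hθ.2]⟩
  have hconj : -(I * muP α ω θ) = conj (I * muP α ω θ) := by simp
  have harg : arg (I * muP α ω θ) ≠ π := by
    rw [mul_comm, arg_real_mul I (muP_pos hω hα1 hθ), arg_I]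
    linarith
  have harg' : arg ((I * muP α ω θ) ^ (α : ℂ) - ω) ≠ π := by
    rw [I_mul_muP_cpow_sub hω hα1 hθ, arg_ofReal_mul_exp_mul_I (rhoP_pos hω hα1 hθ) hθ']
    nlinarith [hθ.2]
  rw [hconj, Fc_conj α β γ ω harg harg', Fc_I_mul_muP hω hα1 hθ]

end Parametrization

theorem pure_imaginary_roots_iff_general (α β γ ω : ℝ) (hω : ω < 0) (hα0 : 0 < α) (hα1 : α ≤ 1)
    (lam : ℂ) :
    ((∃ μ : ℝ, 0 < μ ∧ Fc α β γ ω (Complex.I * (μ : ℂ)) = lam) ↔ lam ∈ PsiSet α β γ ω) ∧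
    ((∃ μ : ℝ, 0 < μ ∧ Fc α β γ ω (-(Complex.I * (μ : ℂ))) = lam) ↔ lam ∈ PsiBar α β γ ω) ∧
    ((∃ s : ℂ, s.re = 0 ∧ s ≠ 0 ∧ Fc α β γ ω s = lam) ↔
      lam ∈ PsiSet α β γ ω ∪ PsiBar α β γ ω) := by
  have upper : ∀ l, (∃ μ : ℝ, 0 < μ ∧ Fc α β γ ω (I * μ) = l) ↔ l ∈ PsiSet α β γ ω := by
    refine fun l ↦ ⟨?_, ?_⟩
    · rintro ⟨μ, hμ, rfl⟩
      obtain ⟨θ, hθ, rfl⟩ := exists_muP_eq hω hα0 hα1 hμ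
      exact ⟨θ, hθ, (Fc_I_mul_muP hω hα1 hθ).symm⟩
    · rintro ⟨θ, hθ, rfl⟩
      exact ⟨muP α ω θ, muP_pos hω hα1 hθ, Fc_I_mul_muP hω hα1 hθ⟩
  have lower : (∃ μ : ℝ, 0 < μ ∧ Fc α β γ ω (-(I * μ)) = lam) ↔ lam ∈ PsiBar α β γ ω := by
    refine ⟨?_, ?_⟩
    · rintro ⟨μ, hμ, rfl⟩
      obtain ⟨θ, hθ, rfl⟩ := exists_muP_eq hω hα0 hα1 hμ
      exact ⟨θ, hθ, by rw [Fc_neg_I_mul_muP hω hα1 hθ, conj_conj]⟩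
    · rintro ⟨θ, hθ, hlam⟩
      exact ⟨muP α ω θ, muP_pos hω hα1 hθ, by rw [Fc_neg_I_mul_muP hω hα1 hθ, hlam, conj_conj]⟩
  refine ⟨upper lam, lower, ?_⟩
  rw [exists_re_eq_zero_ne_zero_iff, mem_union, upper, lower]

theorem pure_imaginary_roots_iff (α β γ ω : ℝ) (hω : ω < 0) (hα0 : 0 < α) (hα1 : α ≤ 1)
    (hαγ : 0 < α * γ) (hβ0 : α * γ ≤ β) (hβ1 : β ≤ 1) (lam : ℂ) :
    ((∃ μ : ℝ, 0 < μ ∧ Fc α β γ ω (Complex.I * (μ : ℂ)) = lam) ↔ lam ∈ PsiSet α β γ ω) ∧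
    ((∃ μ : ℝ, 0 < μ ∧ Fc α β γ ω (-(Complex.I * (μ : ℂ))) = lam) ↔ lam ∈ PsiBar α β γ ω) ∧
    ((∃ s : ℂ, s.re = 0 ∧ s ≠ 0 ∧ Fc α β γ ω s = lam) ↔
      lam ∈ PsiSet α β γ ω ∪ PsiBar α β γ ω) :=
  pure_imaginary_roots_iff_general α β γ ω hω hα0 hα1 lam
end

section
/- Let ω < 0, 0 < α ≤ 1 and 0 < αγ ≤ β ≤ 1. For every s ∈ ℂ with Re(s) ≥ 0 and s ≠ 0, one has Re(F(s)) > 0; equivalently |Arg(F(s))| < π/2. (In the proof one shows Arg(F(s)) = (β − αγ)Arg(s) + γ·Arg(s^α − ω) and |Arg(F(s))| ≤ β·|Arg(s)| ≤ π/2 with strict inequality.) -/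
/-!
With `A = arg s`, `|A| ≤ π / 2` and `s ^ α` has argument `α A`. Adding the positive real `-ω`
to a point of the closed right half-plane keeps its imaginary part and increases its modulus, so
it strictly decreases `|arg|` (via `|arg z| = arcsin (|im z| / ‖z‖)`) unless the point is real.
Hence `F(s) = exp ((β - αγ) log s + γ log (s ^ α - ω))` has argument
`θ = (β - αγ) A + γ arg (s ^ α - ω)` with
`|θ| < (β - αγ) |A| + γ α |A| = β |A| ≤ π / 2` when `A ≠ 0`, and `θ = 0` when `A = 0`.
-/

open Real Complex Filter Set Topology

namespace Complex

theorem arg_exp_of_im_mem_Ioc {z : ℂ} (hz : z.im ∈ Ioc (-π) π) : arg (exp z) = z.im := by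
  rwa [arg_exp, toIocMod_eq_self, show -π + 2 * π = π by ring]

theorem arg_cpow_ofReal {x : ℂ} {t : ℝ} (h : t * arg x ∈ Ioc (-π) π) :
    arg (x ^ (t : ℂ)) = t * arg x := by
  rcases eq_or_ne x 0 with rfl | hx
  · rcases eq_or_ne t 0 with rfl | ht
    · simp
    · simp [zero_cpow (ofReal_ne_zero.mpr ht)]
  rw [cpow_def_of_ne_zero hx, arg_exp_of_im_mem_Ioc] <;>
    simp [log_im, mul_comm, h]

theorem arg_cpow_ofReal_of_re_nonneg {x : ℂ} (hx : 0 ≤ x.re) {t : ℝ} (ht₀ : 0 ≤ t)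
    (ht₁ : t ≤ 1) :
    arg (x ^ (t : ℂ)) = t * arg x := by
  have hbound : |t * arg x| ≤ π / 2 := by
    rw [abs_mul, abs_of_nonneg ht₀]
    nlinarith [abs_nonneg (arg x), abs_arg_le_pi_div_two_iff.mpr hx]
  exact arg_cpow_ofReal ⟨by linarith [abs_le.mp hbound, pi_pos], by linarith [abs_le.mp hbound]⟩

theorem re_cpow_ofReal_nonneg {x : ℂ} (hx : 0 ≤ x.re) {t : ℝ} (ht₀ : 0 ≤ t)
    (ht₁ : t ≤ 1) :
    0 ≤ (x ^ (t : ℂ)).re := by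
  rw [← abs_arg_le_pi_div_two_iff, arg_cpow_ofReal_of_re_nonneg hx ht₀ ht₁, abs_mul,
    abs_of_nonneg ht₀]
  nlinarith [abs_nonneg (arg x), abs_arg_le_pi_div_two_iff.mpr hx]

theorem abs_arg_eq_arcsin {z : ℂ} (hz : 0 ≤ z.re) :
    |arg z| = Real.arcsin (|z.im| / ‖z‖) := by
  rw [arg_of_re_nonneg hz]
  rcases le_total 0 z.im with h | h
  · rw [abs_of_nonneg h, abs_of_nonneg (Real.arcsin_nonneg.mpr (by positivity))]
  · have hq : z.im / ‖z‖ ≤ 0 := div_nonpos_of_nonpos_of_nonneg h (norm_nonneg _)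
    rw [abs_of_nonpos h, abs_of_nonpos (Real.arcsin_nonpos.mpr hq), neg_div, Real.arcsin_neg]

theorem abs_arg_add_ofReal_lt {w : ℂ} (hw : 0 ≤ w.re) (harg : arg w ≠ 0) {r : ℝ}
    (hr : 0 < r) :
    |arg (w + r)| < |arg w| := by
  have him : w.im ≠ 0 := fun h => harg (arg_eq_zero_iff.mpr ⟨hw, h⟩)
  have hnorm : ‖w‖ < ‖w + r‖ := by
    rw [← sq_lt_sq₀ (norm_nonneg _) (norm_nonneg _), Complex.sq_norm, Complex.sq_norm,
      normSq_apply, normSq_apply]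
    simp only [add_re, add_im, ofReal_re, ofReal_im, add_zero]
    nlinarith
  have hw0 : 0 < ‖w‖ := norm_pos_iff.mpr (by rintro rfl; simp at him)
  rw [abs_arg_eq_arcsin hw, abs_arg_eq_arcsin (by simp; linarith)]
  simp only [add_im, ofReal_im, add_zero]
  have hq : 0 ≤ |w.im| / ‖w + r‖ := div_nonneg (abs_nonneg w.im) (norm_nonneg _)
  refine Real.arcsin_lt_arcsin (by linarith) ?_ ?_
  · exact div_lt_div_of_pos_left (abs_pos.mpr him) hw0 hnorm
  · exact div_le_one_of_le₀ (abs_im_le_norm w) hw0.le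

theorem arg_add_ofReal_eq_zero {w : ℂ} (hw : arg w = 0) {r : ℝ} (hr : 0 ≤ r) :
    arg (w + r) = 0 := by
  obtain ⟨hre, him⟩ := arg_eq_zero_iff.mp hw
  exact arg_eq_zero_iff.mpr ⟨by simp; linarith, by simp [him]⟩

theorem abs_arg_cpow_add_ofReal_lt {x : ℂ} (hx : 0 ≤ x.re) (harg : arg x ≠ 0) {t : ℝ}
    (ht₀ : 0 < t) (ht₁ : t ≤ 1) {r : ℝ} (hr : 0 < r) :
    |arg (x ^ (t : ℂ) + r)| < t * |arg x| := by
  have hpow := arg_cpow_ofReal_of_re_nonneg hx ht₀.le ht₁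
  calc |arg (x ^ (t : ℂ) + r)| < |arg (x ^ (t : ℂ))| :=
        abs_arg_add_ofReal_lt (re_cpow_ofReal_nonneg hx ht₀.le ht₁)
          (by rw [hpow]; exact mul_ne_zero ht₀.ne' harg) hr
    _ = t * |arg x| := by rw [hpow, abs_mul, abs_of_pos ht₀]

end Complex

theorem Fc_eq_exp {α β γ ω : ℝ} {s : ℂ} (hs : s ≠ 0) (hu : s ^ (α : ℂ) - ω ≠ 0) :
    Fc α β γ ω s = exp (log s * (β - α * γ : ℝ) + log (s ^ (α : ℂ) - ω) * γ) := by
  rw [Fc, cpow_def_of_ne_zero hs, cpow_def_of_ne_zero hu, Complex.exp_add]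

theorem F_re_pos_on_right_half_plane (α β γ ω : ℝ) (hω : ω < 0) (hα0 : 0 < α) (hα1 : α ≤ 1)
    (hαγ : 0 < α * γ) (hβ0 : α * γ ≤ β) (hβ1 : β ≤ 1) :
    ∀ s : ℂ, 0 ≤ s.re → s ≠ 0 →
      0 < (Fc α β γ ω s).re ∧ |(Fc α β γ ω s).arg| < π / 2 := by
  intro s hre hs
  set u := s ^ (α : ℂ) - ω
  have hu : u = s ^ (α : ℂ) + (-ω : ℝ) := by push_cast; ring
  have hu_re : 0 < u.re := by
    rw [hu, add_re, ofReal_re]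
    linarith [re_cpow_ofReal_nonneg hre hα0.le hα1]
  have hγ : 0 < γ := pos_of_mul_pos_right hαγ hα0.le
  have hA := abs_arg_le_pi_div_two_iff.mpr hre
  set θ := (β - α * γ) * arg s + γ * arg u
  have hθ : |θ| < π / 2 := by
    rcases eq_or_ne (arg s) 0 with hA0 | hA0
    · have hB0 : arg u = 0 := hu ▸ arg_add_ofReal_eq_zero
        (by rw [arg_cpow_ofReal_of_re_nonneg hre hα0.le hα1, hA0, mul_zero]) (by linarith)
      simp [θ, hA0, hB0, pi_pos]
    · have hB := hu ▸ abs_arg_cpow_add_ofReal_lt hre hA0 hα0 hα1 (neg_pos.mpr hω)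
      calc |θ| ≤ (β - α * γ) * |arg s| + γ * |arg u| := by
            refine (abs_add_le _ _).trans_eq ?_
            rw [abs_mul, abs_mul, abs_of_nonneg (sub_nonneg.mpr hβ0), abs_of_pos hγ]
        _ < (β - α * γ) * |arg s| + γ * (α * |arg s|) := by gcongr
        _ = β * |arg s| := by ring
        _ ≤ π / 2 := by nlinarith [abs_nonneg (arg s), hA]
  have him : (log s * (β - α * γ : ℝ) + log u * γ).im = θ := by
    simp [θ, log_im, mul_comm]
  obtain ⟨hθ₁, hθ₂⟩ := abs_lt.mp hθ
  rw [Fc_eq_exp hs (ne_zero_of_re_pos hu_re), arg_exp_of_im_mem_Ioc (by rw [him]; constructor <;> linarith), exp_re,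
    him]
  exact ⟨mul_pos (Real.exp_pos _) (Real.cos_pos_of_mem_Ioo ⟨hθ₁, hθ₂⟩), hθ⟩
end

section
/- Let ω < 0, 0 < α ≤ 1 and 0 < αγ ≤ β ≤ 1. For every s ∈ ℂ not lying on the closed negative real half-axis (−∞, 0], the function F is complex-differentiable at s with derivative F′(s) = s^(−1)·(β + αγω·(s^α − ω)^(−1))·F(s); in particular s^α − ω ≠ 0 for such s. -/
open Real Complex Filter Set Topology

/-! For `0 < α ≤ 1` the principal power `s ↦ s ^ α` multiplies arguments by `α`, so it maps the
slit plane into itself, and subtracting `ω < 0` shifts it to the right, keeping it there. Hence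
both principal powers in `F` are holomorphic at `s`, and the formula is the logarithmic derivative
`F'/F = (β - αγ)/s + αγ s^(α-1)/(s^α - ω)`, which simplifies to `(β + αγω/(s^α - ω))/s`. -/

namespace Complex

lemma cpow_ofReal_mem_slitPlane {z : ℂ} (hz : z ∈ slitPlane) {a : ℝ} (ha₀ : 0 ≤ a) (ha₁ : a ≤ 1) :
    z ^ (a : ℂ) ∈ slitPlane := by
  have hθ : |arg z * a| < π :=
    calc |arg z * a| = |arg z| * a := by rw [abs_mul, abs_of_nonneg ha₀]
      _ ≤ |arg z| := mul_le_of_le_one_right (abs_nonneg _) ha₁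
      _ < π := abs_lt.2 ⟨neg_pi_lt_arg z, (arg_le_pi z).lt_of_ne (slitPlane_arg_ne_pi hz)⟩
  have hr : 0 < ‖z‖ ^ a := Real.rpow_pos_of_pos (norm_pos_iff.2 (slitPlane_ne_zero hz)) a
  rw [mem_slitPlane_iff, cpow_ofReal_re, cpow_ofReal_im]
  by_cases hsin : Real.sin (arg z * a) = 0
  · have hθ₀ : arg z * a = 0 :=
      (Real.sin_eq_zero_iff_of_lt_of_lt (abs_lt.1 hθ).1 (abs_lt.1 hθ).2).1 hsin
    left
    rwa [hθ₀, Real.cos_zero, mul_one]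
  · exact Or.inr (mul_ne_zero hr.ne' hsin)

lemma sub_ofReal_mem_slitPlane {z : ℂ} (hz : z ∈ slitPlane) {c : ℝ} (hc : c ≤ 0) :
    z - c ∈ slitPlane := by
  rw [mem_slitPlane_iff] at hz ⊢
  simp only [sub_re, ofReal_re, sub_im, ofReal_im, sub_zero]
  exact hz.imp (fun h ↦ by linarith) id

end Complex

theorem HasDerivAt.cpow_const_mul_self {f : ℂ → ℂ} {f' x : ℂ} (c : ℂ) (hf : HasDerivAt f f' x)
    (hx : f x ∈ slitPlane) :
    HasDerivAt (fun z ↦ f z ^ c) (c * f' / f x * f x ^ c) x := by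
  convert hf.cpow_const hx using 1
  rw [cpow_sub _ _ (slitPlane_ne_zero hx), cpow_one]
  ring

theorem hasDerivAt_cpow_mul_sub_cpow {s b c : ℂ} (a g : ℂ) (hs : s ∈ slitPlane)
    (hw : s ^ b - c ∈ slitPlane) :
    HasDerivAt (fun z ↦ z ^ a * (z ^ b - c) ^ g)
      ((a + b * g * s ^ b / (s ^ b - c)) / s * (s ^ a * (s ^ b - c) ^ g)) s := by
  have hpow (e : ℂ) := (hasDerivAt_id' s).cpow_const_mul_self e hs
  refine ((hpow a).mul (((hpow b).sub_const c).cpow_const_mul_self g hw)).congr_deriv ?_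
  field_simp [slitPlane_ne_zero hs, slitPlane_ne_zero hw]

theorem F_hasDerivAt_general (α β γ ω : ℝ) (hω : ω < 0) (hα0 : 0 < α) (hα1 : α ≤ 1) :
    ∀ s : ℂ, ¬(s.im = 0 ∧ s.re ≤ 0) →
      s ^ ((α : ℝ) : ℂ) - (ω : ℂ) ≠ 0 ∧
      HasDerivAt (Fc α β γ ω)
        (s⁻¹ * (((β : ℝ) : ℂ) + ((α * γ * ω : ℝ) : ℂ) * (s ^ ((α : ℝ) : ℂ) - (ω : ℂ))⁻¹) *
          Fc α β γ ω s) s := by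
  intro s hs
  have hs_slit : s ∈ slitPlane := by
    rw [mem_slitPlane_iff]
    by_contra! h
    exact hs ⟨h.2, h.1⟩
  have hw : s ^ ((α : ℝ) : ℂ) - (ω : ℂ) ∈ slitPlane :=
    sub_ofReal_mem_slitPlane (cpow_ofReal_mem_slitPlane hs_slit hα0.le hα1) hω.le
  refine ⟨slitPlane_ne_zero hw, ?_⟩
  refine (hasDerivAt_cpow_mul_sub_cpow (β - α * γ : ℝ) γ hs_slit hw).congr_deriv ?_
  unfold Fc
  push_cast
  field_simp [slitPlane_ne_zero hw]
  ring

theorem F_hasDerivAt (α β γ ω : ℝ) (hω : ω < 0) (hα0 : 0 < α) (hα1 : α ≤ 1)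
    (hαγ : 0 < α * γ) (hβ0 : α * γ ≤ β) (hβ1 : β ≤ 1) :
    ∀ s : ℂ, ¬(s.im = 0 ∧ s.re ≤ 0) →
      s ^ ((α : ℝ) : ℂ) - (ω : ℂ) ≠ 0 ∧
      HasDerivAt (Fc α β γ ω)
        (s⁻¹ * (((β : ℝ) : ℂ) + ((α * γ * ω : ℝ) : ℂ) * (s ^ ((α : ℝ) : ℂ) - (ω : ℂ))⁻¹) *
          Fc α β γ ω s) s :=
  F_hasDerivAt_general α β γ ω hω hα0 hα1
end
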